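/- If a sequent Γ ⊢ Δ (with Γ, Δ finite multisets of formulas) is derivable in LBiI, then for any label x the labelled sequent x:Γ ⊢_{G} x:Δ, where G is the single-node label tree with node x and x:Γ labels every formula of Γ with x (similarly x:Δ), is derivable in L-LBiI. -/

import Mathlib

/-- BiInt formulas -/
inductive Form : Type
  | atom : ℕ → Form
  | top  : Form
  | bot  : Form
  | and  : Form → Form → Form
  | or   : Form → Form → Form
  | imp  : Form → Form → Form
  | excl : Form → Form → Form
  deriving DecidableEq

/-- Kripke structures for BiInt -/
structure Kripke where
  W : Type
  le : W → W → Prop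
  le_refl : ∀ w, le w w
  le_trans : ∀ u v w, le u v → le v w → le u w
  nonempty : Nonempty W
  I : W → Set ℕ
  mono : ∀ {w w'}, le w w' → I w ⊆ I w'

/-- truth of a formula at a world -/
def Kripke.force (K : Kripke) : K.W → Form → Prop
  | w, .atom p => p ∈ K.I w
  | _, .top => True
  | _, .bot => False
  | w, .and A B => K.force w A ∧ K.force w B
  | w, .or A B => K.force w A ∨ K.force w B
  | w, .imp A B => ∀ w', K.le w w' → K.force w' A → K.force w' B
  | w, .excl A B => ∃ w', K.le w' w ∧ K.force w' A ∧ ¬ K.force w' B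

/-- validity of a sequent -/
def SeqValid (Γ Δ : Multiset Form) : Prop :=
  ∀ (K : Kripke) (w : K.W), (∀ A ∈ Γ, K.force w A) → ∃ A ∈ Δ, K.force w A

/-- The standard-style sequent calculus LBiI; the boolean parameter tells whether
the cut rule is allowed (`LD false` is cut-free LBiI). -/
inductive LD : Bool → Multiset Form → Multiset Form → Prop
  | hyp (b) (A : Form) (Γ Δ) : LD b (A ::ₘ Γ) (A ::ₘ Δ)
  | cut {Γ Δ} (A : Form) : LD true Γ (A ::ₘ Δ) → LD true (A ::ₘ Γ) Δ → LD true Γ Δ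
  | weakL {b Γ Δ} (A : Form) : LD b Γ Δ → LD b (A ::ₘ Γ) Δ
  | weakR {b Γ Δ} (A : Form) : LD b Γ Δ → LD b Γ (A ::ₘ Δ)
  | contrL {b Γ Δ} {A : Form} : LD b (A ::ₘ A ::ₘ Γ) Δ → LD b (A ::ₘ Γ) Δ
  | contrR {b Γ Δ} {A : Form} : LD b Γ (A ::ₘ A ::ₘ Δ) → LD b Γ (A ::ₘ Δ)
  | topL {b Γ Δ} : LD b Γ Δ → LD b (Form.top ::ₘ Γ) Δ
  | topR (b Γ Δ) : LD b Γ (Form.top ::ₘ Δ)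
  | botL (b Γ Δ) : LD b (Form.bot ::ₘ Γ) Δ
  | botR {b Γ Δ} : LD b Γ Δ → LD b Γ (Form.bot ::ₘ Δ)
  | andL {b Γ Δ A B} : LD b (A ::ₘ B ::ₘ Γ) Δ → LD b (Form.and A B ::ₘ Γ) Δ
  | andR {b Γ Δ A B} : LD b Γ (A ::ₘ Δ) → LD b Γ (B ::ₘ Δ) → LD b Γ (Form.and A B ::ₘ Δ)
  | orL {b Γ Δ A B} : LD b (A ::ₘ Γ) Δ → LD b (B ::ₘ Γ) Δ → LD b (Form.or A B ::ₘ Γ) Δ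
  | orR {b Γ Δ A B} : LD b Γ (A ::ₘ B ::ₘ Δ) → LD b Γ (Form.or A B ::ₘ Δ)
  | impL {b Γ Δ A B} : LD b (Form.imp A B ::ₘ Γ) (A ::ₘ Δ) → LD b (B ::ₘ Γ) Δ →
      LD b (Form.imp A B ::ₘ Γ) Δ
  | impR {b Γ Δ A B} : LD b (A ::ₘ Γ) {B} → LD b Γ (Form.imp A B ::ₘ Δ)
  | exclL {b Γ Δ A B} : LD b {A} (B ::ₘ Δ) → LD b (Form.excl A B ::ₘ Γ) Δ
  | exclR {b Γ Δ A B} : LD b Γ (A ::ₘ Δ) → LD b (B ::ₘ Γ) (Form.excl A B ::ₘ Δ) →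
      LD b Γ (Form.excl A B ::ₘ Δ)

/-- members of nested contexts: formulas or nested sequents -/
inductive NForm : Type
  | fm : Form → NForm
  | seq : List NForm → List NForm → NForm

mutual
  /-- deep equality of nested-context members up to permutation
  (nested contexts are multisets) -/
  inductive NEq : NForm → NForm → Prop
    | fm (A : Form) : NEq (.fm A) (.fm A)
    | seq {Γ Γ' Δ Δ'} : CEq Γ Γ' → CEq Δ Δ' → NEq (.seq Γ Δ) (.seq Γ' Δ')
  /-- equality of nested contexts as multisets -/
  inductive CEq : List NForm → List NForm → Prop
    | nil : CEq [] []
    | cons {a b Γ Γ'} : NEq a b → CEq Γ Γ' → CEq (a :: Γ) (b :: Γ')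
    | swap (a b : NForm) (Γ : List NForm) : CEq (a :: b :: Γ) (b :: a :: Γ)
    | trans {Γ Γ' Γ''} : CEq Γ Γ' → CEq Γ' Γ'' → CEq Γ Γ''
end

/-- The nested sequent calculus N-LBiI; the boolean parameter tells whether
the cut rule is allowed. Nested contexts are lists identified up to `CEq`
(i.e. multisets), so there is an explicit exchange rule. -/
inductive ND : Bool → List NForm → List NForm → Prop
  | exch {b Γ Γ' Δ Δ'} : CEq Γ Γ' → CEq Δ Δ' → ND b Γ Δ → ND b Γ' Δ'
  | hyp (b) (A : Form) (Γ Δ) : ND b (.fm A :: Γ) (.fm A :: Δ)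
  | cut {Γ Δ} (A : Form) : ND true Γ (.fm A :: Δ) → ND true (.fm A :: Γ) Δ → ND true Γ Δ
  | weakL {b Γ Δ} (A : Form) : ND b Γ Δ → ND b (.fm A :: Γ) Δ
  | weakR {b Γ Δ} (A : Form) : ND b Γ Δ → ND b Γ (.fm A :: Δ)
  | contrL {b Γ Δ} {A : Form} : ND b (.fm A :: .fm A :: Γ) Δ → ND b (.fm A :: Γ) Δ
  | contrR {b Γ Δ} {A : Form} : ND b Γ (.fm A :: .fm A :: Δ) → ND b Γ (.fm A :: Δ)
  | topL {b Γ Δ} : ND b Γ Δ → ND b (.fm .top :: Γ) Δ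
  | topR (b Γ Δ) : ND b Γ (.fm .top :: Δ)
  | botL (b Γ Δ) : ND b (.fm .bot :: Γ) Δ
  | botR {b Γ Δ} : ND b Γ Δ → ND b Γ (.fm .bot :: Δ)
  | andL {b Γ Δ A B} : ND b (.fm A :: .fm B :: Γ) Δ → ND b (.fm (.and A B) :: Γ) Δ
  | andR {b Γ Δ A B} : ND b Γ (.fm A :: Δ) → ND b Γ (.fm B :: Δ) → ND b Γ (.fm (.and A B) :: Δ)
  | orL {b Γ Δ A B} : ND b (.fm A :: Γ) Δ → ND b (.fm B :: Γ) Δ → ND b (.fm (.or A B) :: Γ) Δ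
  | orR {b Γ Δ A B} : ND b Γ (.fm A :: .fm B :: Δ) → ND b Γ (.fm (.or A B) :: Δ)
  | impL {b Γ Δ A B} : ND b (.fm (.imp A B) :: Γ) (.fm A :: Δ) → ND b (.fm B :: Γ) Δ →
      ND b (.fm (.imp A B) :: Γ) Δ
  | impR {b Γ Δ A B} : ND b (.fm A :: Γ) [.fm B] → ND b Γ (.fm (.imp A B) :: Δ)
  | exclL {b Γ Δ A B} : ND b [.fm A] (.fm B :: Δ) → ND b (.fm (.excl A B) :: Γ) Δ
  | exclR {b Γ Δ A B} : ND b Γ (.fm A :: Δ) → ND b (.fm B :: Γ) (.fm (.excl A B) :: Δ) →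
      ND b Γ (.fm (.excl A B) :: Δ)
  | nestL {b Γ Δ Γ₀ Δ₀} : ND b Γ₀ (Δ₀ ++ Δ) → ND b (.seq Γ₀ Δ₀ :: Γ) Δ
  | nestR {b Γ Δ Γ₀ Δ₀} : ND b (Γ ++ Γ₀) Δ₀ → ND b Γ (.seq Γ₀ Δ₀ :: Δ)
  | unnestL {b Γ Δ Γ₀ Δ₀} : ND b (.seq Γ₀ Δ₀ :: Γ) Δ → ND b (Γ₀ ++ Γ) (Δ₀ ++ Δ)
  | unnestR {b Γ Δ Γ₀ Δ₀} : ND b Γ (.seq Γ₀ Δ₀ :: Δ) → ND b (Γ₀ ++ Γ) (Δ₀ ++ Δ)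
/-- a finite directed graph with labels (nodes) drawn from ℕ -/
structure LGraph where
  nodes : Finset ℕ
  arcs : Finset (ℕ × ℕ)

/-- renaming of a node in a graph (`G[y/x]`) -/
def LGraph.ren (G : LGraph) (x y : ℕ) : LGraph :=
  ⟨G.nodes.image (fun z => if z = x then y else z),
   G.arcs.image (fun a => ((if a.1 = x then y else a.1), (if a.2 = x then y else a.2)))⟩

/-- labelled contexts: multisets of labelled formulas -/
abbrev LCtx := Multiset (ℕ × Form)

/-- renaming of a label in a labelled context (`Γ[y/x]`) -/
def renC (Γ : LCtx) (x y : ℕ) : LCtx := Γ.map (fun a => ((if a.1 = x then y else a.1), a.2))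

/-- wellformedness of a labelled sequent: all labels are nodes of the graph -/
def Wf (G : LGraph) (Γ Δ : LCtx) : Prop :=
  (∀ a ∈ Γ, a.1 ∈ G.nodes) ∧ (∀ a ∈ Δ, a.1 ∈ G.nodes)

/-- The labelled sequent calculus L-LBiI; the boolean parameter tells whether
the cut rule is allowed. -/
inductive LDeriv : Bool → LGraph → LCtx → LCtx → Prop
  | hyp {G Γ Δ} (b) (x : ℕ) (A : Form) : Wf G Γ Δ → x ∈ G.nodes →
      LDeriv b G ((x, A) ::ₘ Γ) ((x, A) ::ₘ Δ)
  | cut {G Γ Δ} (x : ℕ) (A : Form) : x ∈ G.nodes →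
      LDeriv true G Γ ((x, A) ::ₘ Δ) → LDeriv true G ((x, A) ::ₘ Γ) Δ → LDeriv true G Γ Δ
  | weakL {b G Γ Δ} (x : ℕ) (A : Form) : x ∈ G.nodes → LDeriv b G Γ Δ →
      LDeriv b G ((x, A) ::ₘ Γ) Δ
  | weakR {b G Γ Δ} (x : ℕ) (A : Form) : x ∈ G.nodes → LDeriv b G Γ Δ →
      LDeriv b G Γ ((x, A) ::ₘ Δ)
  | contrL {b G Γ Δ x A} : LDeriv b G ((x, A) ::ₘ (x, A) ::ₘ Γ) Δ → LDeriv b G ((x, A) ::ₘ Γ) Δ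
  | contrR {b G Γ Δ x A} : LDeriv b G Γ ((x, A) ::ₘ (x, A) ::ₘ Δ) → LDeriv b G Γ ((x, A) ::ₘ Δ)
  /-- `nodesplit U`: the conclusion graph is `G₀ ⋈y (y,x) ⋈x G`,
  the premise graph is `G₀ ⋈y G[y/x]`, with proviso `↓G x` -/
  | nodesplitU {b Γ Δ} (G₀ G : LGraph) (x y : ℕ) :
      y ∈ G₀.nodes → x ∈ G.nodes → G₀.nodes ∩ G.nodes = ∅ →
      (∀ z, (z, x) ∉ G.arcs) →
      LDeriv b ⟨G₀.nodes ∪ (G.ren x y).nodes, G₀.arcs ∪ (G.ren x y).arcs⟩ Γ Δ →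
      LDeriv b ⟨G₀.nodes ∪ G.nodes, insert (y, x) (G₀.arcs ∪ G.arcs)⟩ Γ Δ
  /-- `nodesplit D`: the conclusion graph is `G ⋈x (x,y) ⋈y G₀`,
  the premise graph is `G[y/x] ⋈y G₀`, with proviso `↑G x` -/
  | nodesplitD {b Γ Δ} (G G₀ : LGraph) (x y : ℕ) :
      x ∈ G.nodes → y ∈ G₀.nodes → G.nodes ∩ G₀.nodes = ∅ →
      (∀ z, (x, z) ∉ G.arcs) →
      LDeriv b ⟨(G.ren x y).nodes ∪ G₀.nodes, (G.ren x y).arcs ∪ G₀.arcs⟩ Γ Δ →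
      LDeriv b ⟨G.nodes ∪ G₀.nodes, insert (x, y) (G.arcs ∪ G₀.arcs)⟩ Γ Δ
  /-- `nodemerge D`: the premise graph is `G₀ ⋈y (y,x) ⋈x G`,
  the conclusion graph is `G₀[x/y] ⋈x G` and `y` is renamed to `x` in the contexts -/
  | nodemergeD {b Γ Δ} (G₀ G : LGraph) (x y : ℕ) :
      y ∈ G₀.nodes → x ∈ G.nodes → G₀.nodes ∩ G.nodes = ∅ →
      LDeriv b ⟨G₀.nodes ∪ G.nodes, insert (y, x) (G₀.arcs ∪ G.arcs)⟩ Γ Δ →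
      LDeriv b ⟨(G₀.ren y x).nodes ∪ G.nodes, (G₀.ren y x).arcs ∪ G.arcs⟩
        (renC Γ y x) (renC Δ y x)
  /-- `nodemerge U`: the premise graph is `G ⋈x (x,y) ⋈y G₀`,
  the conclusion graph is `G ⋈x G₀[x/y]` and `y` is renamed to `x` in the contexts -/
  | nodemergeU {b Γ Δ} (G G₀ : LGraph) (x y : ℕ) :
      x ∈ G.nodes → y ∈ G₀.nodes → G.nodes ∩ G₀.nodes = ∅ →
      LDeriv b ⟨G.nodes ∪ G₀.nodes, insert (x, y) (G.arcs ∪ G₀.arcs)⟩ Γ Δ →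
      LDeriv b ⟨G.nodes ∪ (G₀.ren y x).nodes, G.arcs ∪ (G₀.ren y x).arcs⟩
        (renC Γ y x) (renC Δ y x)
  | monotL {b G Γ Δ A} (x y : ℕ) : (x, y) ∈ G.arcs →
      LDeriv b G ((x, A) ::ₘ (y, A) ::ₘ Γ) Δ → LDeriv b G ((x, A) ::ₘ Γ) Δ
  | monotR {b G Γ Δ A} (x y : ℕ) : (y, x) ∈ G.arcs →
      LDeriv b G Γ ((y, A) ::ₘ (x, A) ::ₘ Δ) → LDeriv b G Γ ((x, A) ::ₘ Δ)
  | topL {b G Γ Δ x} : x ∈ G.nodes → LDeriv b G Γ Δ → LDeriv b G ((x, Form.top) ::ₘ Γ) Δ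
  | topR {G Γ Δ} (b) (x : ℕ) : Wf G Γ Δ → x ∈ G.nodes → LDeriv b G Γ ((x, Form.top) ::ₘ Δ)
  | botL {G Γ Δ} (b) (x : ℕ) : Wf G Γ Δ → x ∈ G.nodes → LDeriv b G ((x, Form.bot) ::ₘ Γ) Δ
  | botR {b G Γ Δ x} : x ∈ G.nodes → LDeriv b G Γ Δ → LDeriv b G Γ ((x, Form.bot) ::ₘ Δ)
  | andL {b G Γ Δ x A B} : LDeriv b G ((x, A) ::ₘ (x, B) ::ₘ Γ) Δ →
      LDeriv b G ((x, Form.and A B) ::ₘ Γ) Δ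
  | andR {b G Γ Δ x A B} : LDeriv b G Γ ((x, A) ::ₘ Δ) → LDeriv b G Γ ((x, B) ::ₘ Δ) →
      LDeriv b G Γ ((x, Form.and A B) ::ₘ Δ)
  | orL {b G Γ Δ x A B} : LDeriv b G ((x, A) ::ₘ Γ) Δ → LDeriv b G ((x, B) ::ₘ Γ) Δ →
      LDeriv b G ((x, Form.or A B) ::ₘ Γ) Δ
  | orR {b G Γ Δ x A B} : LDeriv b G Γ ((x, A) ::ₘ (x, B) ::ₘ Δ) →
      LDeriv b G Γ ((x, Form.or A B) ::ₘ Δ)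
  | impL {b G Γ Δ x A B} : LDeriv b G ((x, Form.imp A B) ::ₘ Γ) ((x, A) ::ₘ Δ) →
      LDeriv b G ((x, B) ::ₘ Γ) Δ → LDeriv b G ((x, Form.imp A B) ::ₘ Γ) Δ
  /-- `⊃R`: the premise graph is `G ⋈x (x,y)` with `y` fresh -/
  | impR {b G Γ Δ A B} (x y : ℕ) : x ∈ G.nodes → y ∉ G.nodes →
      LDeriv b ⟨insert y G.nodes, insert (x, y) G.arcs⟩ ((y, A) ::ₘ Γ) ((y, B) ::ₘ Δ) →
      LDeriv b G Γ ((x, Form.imp A B) ::ₘ Δ)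
  /-- `⤙L`: the premise graph is `(y,x) ⋈x G` with `y` fresh -/
  | exclL {b G Γ Δ A B} (x y : ℕ) : x ∈ G.nodes → y ∉ G.nodes →
      LDeriv b ⟨insert y G.nodes, insert (y, x) G.arcs⟩ ((y, A) ::ₘ Γ) ((y, B) ::ₘ Δ) →
      LDeriv b G ((x, Form.excl A B) ::ₘ Γ) Δ
  | exclR {b G Γ Δ x A B} : LDeriv b G Γ ((x, A) ::ₘ Δ) →
      LDeriv b G ((x, B) ::ₘ Γ) ((x, Form.excl A B) ::ₘ Δ) →
      LDeriv b G Γ ((x, Form.excl A B) ::ₘ Δ)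


lemma wf_map {G : LGraph} {x : ℕ} (hx : x ∈ G.nodes) (Γ Δ : Multiset Form) :
    Wf G (Γ.map fun A => (x, A)) (Δ.map fun A => (x, A)) := by
  constructor <;> intro a ha <;>
    · obtain ⟨A, -, rfl⟩ := Multiset.mem_map.1 ha; exact hx

lemma weakLs {b G Γ Δ} (S : LCtx) (h : ∀ a ∈ S, a.1 ∈ G.nodes) (d : LDeriv b G Γ Δ) :
    LDeriv b G (S + Γ) Δ := by
  induction S using Multiset.induction_on with
  | empty => simpa using d
  | cons a s ih =>
      rw [Multiset.cons_add]
      have := LDeriv.weakL a.1 a.2 (h a (by simp)) (ih fun a ha => h a (by simp [ha]))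
      simpa using this

lemma weakRs {b G Γ Δ} (S : LCtx) (h : ∀ a ∈ S, a.1 ∈ G.nodes) (d : LDeriv b G Γ Δ) :
    LDeriv b G Γ (S + Δ) := by
  induction S using Multiset.induction_on with
  | empty => simpa using d
  | cons a s ih =>
      rw [Multiset.cons_add]
      have := LDeriv.weakR a.1 a.2 (h a (by simp)) (ih fun a ha => h a (by simp [ha]))
      simpa using this

lemma transferL {b : Bool} {G : LGraph} {Δ : LCtx} {x y : ℕ}
    (harc : (x, y) ∈ G.arcs) (hx : x ∈ G.nodes) (P : Multiset Form) :
    ∀ S : LCtx, LDeriv b G (P.map (fun A => (y, A)) + S) Δ →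
      LDeriv b G (P.map (fun A => (x, A)) + S) Δ := by
  induction P using Multiset.induction_on with
  | empty => intro S d; simpa using d
  | cons A s ih =>
      intro S d
      rw [Multiset.map_cons, Multiset.cons_add] at d
      have d1 : LDeriv b G ((x, A) ::ₘ (s.map (fun A => (y, A)) + S)) Δ :=
        LDeriv.monotL x y harc (LDeriv.weakL x A hx d)
      rw [← Multiset.add_cons] at d1
      have d2 := ih ((x, A) ::ₘ S) d1
      rw [Multiset.add_cons] at d2
      rw [Multiset.map_cons, Multiset.cons_add]
      exact d2

lemma transferR {b : Bool} {G : LGraph} {Γ : LCtx} {x y : ℕ}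
    (harc : (y, x) ∈ G.arcs) (hx : x ∈ G.nodes) (P : Multiset Form) :
    ∀ S : LCtx, LDeriv b G Γ (P.map (fun A => (y, A)) + S) →
      LDeriv b G Γ (P.map (fun A => (x, A)) + S) := by
  induction P using Multiset.induction_on with
  | empty => intro S d; simpa using d
  | cons A s ih =>
      intro S d
      rw [Multiset.map_cons, Multiset.cons_add] at d
      have d0 := LDeriv.weakR x A hx d
      rw [Multiset.cons_swap] at d0
      have d1 : LDeriv b G Γ ((x, A) ::ₘ (s.map (fun A => (y, A)) + S)) :=
        LDeriv.monotR x y harc d0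
      rw [← Multiset.add_cons] at d1
      have d2 := ih ((x, A) ::ₘ S) d1
      rw [Multiset.add_cons] at d2
      rw [Multiset.map_cons, Multiset.cons_add]
      exact d2

lemma ld_to_llbii {b : Bool} {Γ Δ : Multiset Form} (h : LD b Γ Δ) : ∀ x : ℕ,
    LDeriv b ⟨{x}, ∅⟩ (Γ.map (fun A => (x, A))) (Δ.map (fun A => (x, A))) := by
  induction h with
  | hyp b A Γ Δ =>
      intro x
      simp only [Multiset.map_cons]
      exact LDeriv.hyp b x A (wf_map (by simp) Γ Δ) (by simp)
  | cut A h1 h2 ih1 ih2 =>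
      intro x
      refine LDeriv.cut x A (by simp) ?_ ?_
      · simpa using ih1 x
      · simpa using ih2 x
  | weakL A h ih =>
      intro x
      simpa using LDeriv.weakL x A (by simp) (ih x)
  | weakR A h ih =>
      intro x
      simpa using LDeriv.weakR x A (by simp) (ih x)
  | contrL h ih =>
      intro x
      simp only [Multiset.map_cons]
      exact LDeriv.contrL (by simpa using ih x)
  | contrR h ih =>
      intro x
      simp only [Multiset.map_cons]
      exact LDeriv.contrR (by simpa using ih x)
  | topL h ih =>
      intro x
      simpa using LDeriv.topL (by simp) (ih x)
  | topR b Γ Δ =>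
      intro x
      simpa using LDeriv.topR b x (wf_map (by simp) Γ Δ) (by simp)
  | botL b Γ Δ =>
      intro x
      simpa using LDeriv.botL b x (wf_map (by simp) Γ Δ) (by simp)
  | botR h ih =>
      intro x
      simpa using LDeriv.botR (by simp) (ih x)
  | andL h ih =>
      intro x
      simp only [Multiset.map_cons]
      exact LDeriv.andL (by simpa using ih x)
  | andR h1 h2 ih1 ih2 =>
      intro x
      simp only [Multiset.map_cons]
      exact LDeriv.andR (by simpa using ih1 x) (by simpa using ih2 x)
  | orL h1 h2 ih1 ih2 =>
      intro x
      simp only [Multiset.map_cons]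
      exact LDeriv.orL (by simpa using ih1 x) (by simpa using ih2 x)
  | orR h ih =>
      intro x
      simp only [Multiset.map_cons]
      exact LDeriv.orR (by simpa using ih x)
  | impL h1 h2 ih1 ih2 =>
      intro x
      simp only [Multiset.map_cons]
      exact LDeriv.impL (by simpa using ih1 x) (by simpa using ih2 x)
  | @impR b Γ Δ A B h ih =>
      intro x
      set y := x + 1 with hy
      have hxy : x ≠ y := by omega
      -- derivation at label y on single-node graph {y}
      have d0 : LDeriv b ⟨{y}, ∅⟩ ((y, A) ::ₘ Γ.map (fun C => (y, C))) {(y, B)} := by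
        simpa using ih y
      -- move to graph x → y via nodesplitD
      have hpre : (⟨((⟨{x}, ∅⟩ : LGraph).ren x y).nodes ∪ (⟨{y}, ∅⟩ : LGraph).nodes,
          ((⟨{x}, ∅⟩ : LGraph).ren x y).arcs ∪ (⟨{y}, ∅⟩ : LGraph).arcs⟩ : LGraph)
          = ⟨{y}, ∅⟩ := by
        simp [LGraph.ren]
      have d1 := LDeriv.nodesplitD (b := b) ⟨{x}, ∅⟩ ⟨{y}, ∅⟩ x y (by simp) (by simp)
        (by simp [Finset.eq_empty_iff_forall_notMem, hxy]) (by simp)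
        (hpre ▸ d0)
      have hG : (⟨(⟨{x}, ∅⟩ : LGraph).nodes ∪ (⟨{y}, ∅⟩ : LGraph).nodes,
          insert (x, y) ((⟨{x}, ∅⟩ : LGraph).arcs ∪ (⟨{y}, ∅⟩ : LGraph).arcs)⟩ : LGraph)
          = ⟨insert y {x}, insert (x, y) ∅⟩ := by
        rw [show ((⟨{x}, ∅⟩ : LGraph).nodes ∪ (⟨{y}, ∅⟩ : LGraph).nodes) = insert y {x} from by
          ext z; simp [or_comm]]
        rw [show ((⟨{x}, ∅⟩ : LGraph).arcs ∪ (⟨{y}, ∅⟩ : LGraph).arcs) = (∅ : Finset (ℕ × ℕ)) from by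
          simp]
      rw [hG] at d1
      set G' : LGraph := ⟨insert y {x}, insert (x, y) ∅⟩ with hG'
      -- weaken right with x-labelled Δ
      have d2 : LDeriv b G' ((y, A) ::ₘ Γ.map (fun C => (y, C)))
          ((y, B) ::ₘ Δ.map (fun C => (x, C))) := by
        have := weakRs (Δ.map (fun C => (x, C)))
          (by intro a ha; obtain ⟨C, -, rfl⟩ := Multiset.mem_map.1 ha; simp [G']) d1
        have e : Δ.map (fun C => (x, C)) + ({(y, B)} : LCtx)
            = (y, B) ::ₘ Δ.map (fun C => (x, C)) := by
          rw [add_comm, Multiset.singleton_add]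
        rwa [e] at this
      -- transfer Γ from y to x
      have d3 : LDeriv b G' ((y, A) ::ₘ Γ.map (fun C => (x, C)))
          ((y, B) ::ₘ Δ.map (fun C => (x, C))) := by
        have e1 : (y, A) ::ₘ Γ.map (fun C => (y, C))
            = Γ.map (fun C => (y, C)) + {(y, A)} := by
          rw [add_comm, Multiset.singleton_add]
        have e2 : (y, A) ::ₘ Γ.map (fun C => (x, C))
            = Γ.map (fun C => (x, C)) + {(y, A)} := by
          rw [add_comm, Multiset.singleton_add]
        rw [e2]
        exact transferL (x := x) (y := y) (by simp [G']) (by simp [G']) Γ {(y, A)} (by rwa [e1] at d2)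
      simp only [Multiset.map_cons]
      exact LDeriv.impR x y (by simp) (by simp [Ne.symm hxy]) d3
  | @exclL b Γ Δ A B h ih =>
      intro x
      set y := x + 1 with hy
      have hxy : x ≠ y := by omega
      have d0 : LDeriv b ⟨{y}, ∅⟩ {(y, A)} ((y, B) ::ₘ Δ.map (fun C => (y, C))) := by
        simpa using ih y
      have hpre : (⟨(⟨{y}, ∅⟩ : LGraph).nodes ∪ ((⟨{x}, ∅⟩ : LGraph).ren x y).nodes,
          (⟨{y}, ∅⟩ : LGraph).arcs ∪ ((⟨{x}, ∅⟩ : LGraph).ren x y).arcs⟩ : LGraph)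
          = ⟨{y}, ∅⟩ := by
        simp [LGraph.ren]
      have d1 := LDeriv.nodesplitU (b := b) ⟨{y}, ∅⟩ ⟨{x}, ∅⟩ x y (by simp) (by simp)
        (by simp [Finset.eq_empty_iff_forall_notMem, hxy]) (by simp)
        (hpre ▸ d0)
      have hG : (⟨(⟨{y}, ∅⟩ : LGraph).nodes ∪ (⟨{x}, ∅⟩ : LGraph).nodes,
          insert (y, x) ((⟨{y}, ∅⟩ : LGraph).arcs ∪ (⟨{x}, ∅⟩ : LGraph).arcs)⟩ : LGraph)
          = ⟨insert y {x}, insert (y, x) ∅⟩ := by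
        rw [show ((⟨{y}, ∅⟩ : LGraph).nodes ∪ (⟨{x}, ∅⟩ : LGraph).nodes) = insert y {x} from by
          ext z; simp]
        rw [show ((⟨{y}, ∅⟩ : LGraph).arcs ∪ (⟨{x}, ∅⟩ : LGraph).arcs) = (∅ : Finset (ℕ × ℕ)) from by
          simp]
      rw [hG] at d1
      set G' : LGraph := ⟨insert y {x}, insert (y, x) ∅⟩ with hG'
      -- transfer Δ from y to x on the right
      have d2 : LDeriv b G' {(y, A)} ((y, B) ::ₘ Δ.map (fun C => (x, C))) := by
        have e1 : (y, B) ::ₘ Δ.map (fun C => (y, C))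
            = Δ.map (fun C => (y, C)) + {(y, B)} := by
          rw [add_comm, Multiset.singleton_add]
        have e2 : (y, B) ::ₘ Δ.map (fun C => (x, C))
            = Δ.map (fun C => (x, C)) + {(y, B)} := by
          rw [add_comm, Multiset.singleton_add]
        rw [e2]
        exact transferR (x := x) (y := y) (by simp [G']) (by simp [G']) Δ {(y, B)} (by rwa [e1] at d1)
      -- weaken left with x-labelled Γ
      have d3 : LDeriv b G' ((y, A) ::ₘ Γ.map (fun C => (x, C)))
          ((y, B) ::ₘ Δ.map (fun C => (x, C))) := by
        have := weakLs (Γ.map (fun C => (x, C)))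
          (by intro a ha; obtain ⟨C, -, rfl⟩ := Multiset.mem_map.1 ha; simp [G']) d2
        have e : Γ.map (fun C => (x, C)) + ({(y, A)} : LCtx)
            = (y, A) ::ₘ Γ.map (fun C => (x, C)) := by
          rw [add_comm, Multiset.singleton_add]
        rwa [e] at this
      simp only [Multiset.map_cons]
      exact LDeriv.exclL x y (by simp) (by simp [Ne.symm hxy]) d3
  | exclR h1 h2 ih1 ih2 =>
      intro x
      simp only [Multiset.map_cons]
      exact LDeriv.exclR (by simpa using ih1 x) (by simpa using ih2 x)

/-- if Γ ⊢ Δ is derivable in LBiI then x:Γ ⊢_{single node x} x:Δ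
is derivable in L-LBiI -/
theorem lbii_to_llbii (Γ Δ : Multiset Form) (h : LD true Γ Δ) (x : ℕ) :
    LDeriv true ⟨{x}, ∅⟩ (Γ.map (fun A => (x, A))) (Δ.map (fun A => (x, A))) := by
  exact ld_to_llbii h x
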